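/- arXiv:2404.18711 — 2 statements merged into one kernel-verified Lean document; each statement's English description precedes it below -/
import Mathlib

section
/- Let ξ ∈ (0,1) and η ∈ (ξ,1) be fixed and set M = max( (1 − η²ξ)/(ξ(1−η)²) , ((log ξ)/(log η) + 2)/(η²ξ(1−η)) ). If x ≥ M and {(a_i, b_i] : i = 0,…,d} is the η-covering of (ξx, x], then Σ_{i=0}^{d} (b_i − a_i) ≤ (1 − ξη³) x. -/
open Filter Topology

/-- `seqB η x i = f^i(⌈x⌉)` where `f(y) = ⌈η y⌉`. -/
noncomputable def seqB (η x : ℝ) (i : ℕ) : ℝ :=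
  (fun y : ℝ => ((⌈η * y⌉ : ℤ) : ℝ))^[i] ((⌈x⌉ : ℤ) : ℝ)

/-- `seqA η x i = η * seqB η x i`. -/
noncomputable def seqA (η x : ℝ) (i : ℕ) : ℝ := η * seqB η x i

/-!
Rounding up costs at most `1` per step, so the lengths `b_i - a_i = (1 - η) b_i` telescope
against `b_i - b_{i+1} + 1` and the sum is at most `x + 1 - ηξx + (d + 1)`; it remains to show
`d < T := η²ξ(1-η)x`. While `a_i > ξx` the additive error is a relative one,
`a_{i+1} ≤ η (a_i + 1) ≤ ρ a_i` with `ρ = η (1 + 1/(ξx))`, so `ξ < ρ^d`.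
Taking logarithms, `d (-log η - 1/(ξx)) < -log ξ`, and `log ξ / log η + 2 ≤ T` turns this into `d < T`.
-/

open Finset Real

section Covering

variable {ξ η x : ℝ}

lemma seqB_succ (η x : ℝ) (i : ℕ) : seqB η x (i + 1) = ⌈η * seqB η x i⌉ :=
  Function.iterate_succ_apply' _ _ _

lemma le_seqB_succ (η x : ℝ) (i : ℕ) : η * seqB η x i ≤ seqB η x (i + 1) := by
  rw [seqB_succ]
  exact Int.le_ceil _

lemma seqB_succ_le (η x : ℝ) (i : ℕ) : seqB η x (i + 1) ≤ η * seqB η x i + 1 := by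
  rw [seqB_succ]
  exact (Int.ceil_lt_add_one _).le

lemma seqA_succ_le (hη : 0 ≤ η) (i : ℕ) : seqA η x (i + 1) ≤ η * (seqA η x i + 1) := by
  rw [seqA, seqA]
  exact mul_le_mul_of_nonneg_left (seqB_succ_le η x i) hη

lemma sum_seqB_sub_seqA_le (η x : ℝ) (n : ℕ) :
    ∑ i ∈ range n, (seqB η x i - seqA η x i) ≤ seqB η x 0 - seqB η x n + n := by
  calc ∑ i ∈ range n, (seqB η x i - seqA η x i)
      ≤ ∑ i ∈ range n, (seqB η x i - seqB η x (i + 1) + 1) :=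
        sum_le_sum fun i _ => by rw [seqA]; linarith [seqB_succ_le η x i]
    _ = seqB η x 0 - seqB η x n + n := by
        rw [sum_add_distrib, sum_range_sub']
        simp

lemma le_seqB_of_lt_seqA (hξ : ξ ≤ 1) (hx : 0 ≤ x) {d : ℕ}
    (hd : ∀ i < d, ξ * x < seqA η x i) : ξ * x ≤ seqB η x d := by
  cases d with
  | zero => exact (mul_le_of_le_one_left hx hξ).trans (Int.le_ceil x)
  | succ n => exact (hd n n.lt_succ_self).le.trans (le_seqB_succ η x n)

lemma seqA_le_pow_mul (hξ0 : 0 < ξ) (hξ1 : ξ ≤ 1) (hη : 0 ≤ η) (hx : 0 < x) {n : ℕ}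
    (h : ∀ i < n, ξ * x ≤ seqA η x i) :
    seqA η x n ≤ (η * (1 + (ξ * x)⁻¹)) ^ (n + 1) * x := by
  induction n with
  | zero =>
    have hceil : (⌈x⌉ : ℝ) ≤ x + ξ⁻¹ :=
      (Int.ceil_lt_add_one x).le.trans (by gcongr; exact one_le_inv₀ hξ0 |>.2 hξ1)
    calc seqA η x 0 = η * ⌈x⌉ := rfl
      _ ≤ η * (x + ξ⁻¹) := by gcongr
      _ = (η * (1 + (ξ * x)⁻¹)) ^ (0 + 1) * x := by rw [zero_add, pow_one]; field_simp
  | succ n ih =>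
    have hn : 1 ≤ (ξ * x)⁻¹ * seqA η x n :=
      (one_le_inv_mul₀ (by positivity)).2 (h n n.lt_succ_self)
    calc seqA η x (n + 1) ≤ η * (seqA η x n + 1) := seqA_succ_le hη n
      _ ≤ η * (1 + (ξ * x)⁻¹) * seqA η x n := by nlinarith
      _ ≤ η * (1 + (ξ * x)⁻¹) * ((η * (1 + (ξ * x)⁻¹)) ^ (n + 1) * x) := by
        gcongr
        exact ih fun i hi => h i (hi.trans n.lt_succ_self)
      _ = (η * (1 + (ξ * x)⁻¹)) ^ (n + 1 + 1) * x := by ring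

lemma lt_pow_of_lt_seqA (hξ0 : 0 < ξ) (hξ1 : ξ < 1) (hη : 0 ≤ η) (hx : 0 < x) {d : ℕ}
    (hd : ∀ i < d, ξ * x < seqA η x i) : ξ < (η * (1 + (ξ * x)⁻¹)) ^ d := by
  cases d with
  | zero => simpa using hξ1
  | succ n =>
    have hle := seqA_le_pow_mul hξ0 hξ1.le hη hx (n := n) fun i hi =>
      (hd i (hi.trans n.lt_succ_self)).le
    exact lt_of_mul_lt_mul_right ((hd n n.lt_succ_self).trans_le hle) hx.le

lemma mul_sub_lt_neg_log_of_lt_pow {u : ℝ} {d : ℕ} (hξ : 0 < ξ) (hη : 0 < η) (hu : 0 ≤ u)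
    (h : ξ < (η * (1 + u)) ^ d) : d * (-log η - u) < -log ξ := by
  have hlog := log_lt_log hξ h
  rw [log_pow, log_mul hη.ne' (by positivity)] at hlog
  have hlog1 : (d : ℝ) * log (1 + u) ≤ d * u :=
    mul_le_mul_of_nonneg_left (by linarith [log_le_sub_one_of_pos (by positivity : 0 < 1 + u)])
      d.cast_nonneg
  linarith

lemma two_lt_of_log_div_log_add_two_le {T : ℝ} (hξ0 : 0 < ξ) (hξ1 : ξ < 1) (hη0 : 0 < η)
    (hη1 : η < 1) (hT : log ξ / log η + 2 ≤ T) : 2 < T := by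
  linarith [div_pos_of_neg_of_neg (log_neg hξ0 hξ1) (log_neg hη0 hη1)]

lemma natCast_lt_of_lt_seqA (hξ0 : 0 < ξ) (hξη : ξ < η) (hη1 : η < 1) (hx : 0 < x)
    (hT : log ξ / log η + 2 ≤ η ^ 2 * ξ * (1 - η) * x) {d : ℕ}
    (hd : ∀ i < d, ξ * x < seqA η x i) : (d : ℝ) < η ^ 2 * ξ * (1 - η) * x := by
  set T := η ^ 2 * ξ * (1 - η) * x with hT_def
  have hη0 : 0 < η := hξ0.trans hξη
  have hB : 0 < -log η := neg_pos.2 (log_neg hη0 hη1)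
  have hB1 : 1 - η ≤ -log η := by linarith [log_le_sub_one_of_pos hη0]
  have hT2 : 2 < T := two_lt_of_log_div_log_add_two_le hξ0 (hξη.trans hη1) hη0 hη1 hT
  have hA : -log ξ ≤ (T - 2) * -log η := by
    have hAL : -log ξ = log ξ / log η * -log η := by field_simp [(log_neg hη0 hη1).ne]
    rw [hAL]
    exact mul_le_mul_of_nonneg_right (by linarith) hB.le
  have huT : T * (ξ * x)⁻¹ = η ^ 2 * (1 - η) := by
    rw [hT_def]; field_simp
  have hdlog := mul_sub_lt_neg_log_of_lt_pow hξ0 hη0 (by positivity)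
    (lt_pow_of_lt_seqA hξ0 (hξη.trans hη1) hη0.le hx hd)
  have hη2 : η ^ 2 < 2 := by nlinarith
  have hTpos : 0 < T := by linarith
  refine lt_of_mul_lt_mul_right (a := -log η * (T - η ^ 2)) ?_ (mul_pos hB (by linarith)).le
  calc (d : ℝ) * (-log η * (T - η ^ 2)) = d * (-log η * T - η ^ 2 * -log η) := by ring
    _ ≤ d * (-log η * T - η ^ 2 * (1 - η)) := by gcongr
    _ = T * (d * (-log η - (ξ * x)⁻¹)) := by rw [← huT]; ring
    _ < T * ((T - 2) * -log η) := mul_lt_mul_of_pos_left (hdlog.trans_le hA) hTpos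
    _ ≤ T * (-log η * (T - η ^ 2)) := by rw [mul_comm (-log η)]; gcongr

end Covering

theorem stmt_16_general (ξ η x : ℝ) (hξ : ξ ∈ Set.Ioo (0 : ℝ) 1) (hη : η ∈ Set.Ioo ξ 1)
    (hx : max ((1 - η ^ 2 * ξ) / (ξ * (1 - η) ^ 2))
        ((Real.log ξ / Real.log η + 2) / (η ^ 2 * ξ * (1 - η))) ≤ x)
    (d : ℕ) (hd2 : ∀ i : ℕ, i < d → ξ * x < seqA η x i) :
    ∑ i ∈ Finset.range (d + 1), (seqB η x i - seqA η x i) ≤ (1 - ξ * η ^ 3) * x := by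
  obtain ⟨hξ0, hξ1⟩ := hξ
  obtain ⟨hξη, hη1⟩ := hη
  have hη0 : 0 < η := hξ0.trans hξη
  have hT : log ξ / log η + 2 ≤ η ^ 2 * ξ * (1 - η) * x := by
    have := le_of_max_le_right hx
    rwa [div_le_iff₀ (by have := sub_pos.2 hη1; positivity), mul_comm] at this
  have hT2 := two_lt_of_log_div_log_add_two_le hξ0 hξ1 hη0 hη1 hT
  have hx0 : 0 < x := pos_of_mul_pos_right (a := η ^ 2 * ξ * (1 - η)) (by linarith)
    (by have := sub_pos.2 hη1; positivity)
  have hd := natCast_lt_of_lt_seqA hξ0 hξη hη1 hx0 hT hd2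
  have hsum := sum_seqB_sub_seqA_le η x (d + 1)
  have hb0 : seqB η x 0 ≤ x + 1 := (Int.ceil_lt_add_one x).le
  have hbd : η * (ξ * x) ≤ seqB η x (d + 1) :=
    (mul_le_mul_of_nonneg_left (le_seqB_of_lt_seqA hξ1.le hx0.le hd2) hη0.le).trans
      (le_seqB_succ η x d)
  have h2 : 2 < ξ * η * (1 - η) * x := by nlinarith
  push_cast at hsum
  linarith

theorem stmt_16 (ξ η x : ℝ) (hξ : ξ ∈ Set.Ioo (0 : ℝ) 1) (hη : η ∈ Set.Ioo ξ 1)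
    (hx : max ((1 - η ^ 2 * ξ) / (ξ * (1 - η) ^ 2))
        ((Real.log ξ / Real.log η + 2) / (η ^ 2 * ξ * (1 - η))) ≤ x)
    (d : ℕ) (hd1 : seqA η x d ≤ ξ * x) (hd2 : ∀ i : ℕ, i < d → ξ * x < seqA η x i) :
    ∑ i ∈ Finset.range (d + 1), (seqB η x i - seqA η x i) ≤ (1 - ξ * η ^ 3) * x :=
  stmt_16_general ξ η x hξ hη hx d hd2
end

section
/- The following inequality holds: liminf_{η→1⁻} ( limsup_{n→∞, n ∈ ℕ} (F_Λ(n) − F_Λ(ηn))/((1−η)n) ) ≥ sup_{ξ ∈ (0,1)} ( limsup_{x→∞} (F_Λ(x) − F_Λ(ξx))/((1−ξ)x) ), where the inner limsup on the left is along the positive integers n and the inner limsup on the right is along the positive reals x. -/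
open Filter Topology

/-- The counting function of the sequence `Λ`: `F_Λ(t) = #{k : Λ k ≤ t}` for `t > 0`
and `0` otherwise. -/
noncomputable def countFn (Λ : ℕ → ℝ) (t : ℝ) : ℝ :=
  if 0 < t then (Nat.card {k : ℕ | Λ k ≤ t} : ℝ) else 0

/-- A sequence of intervals `((a n, b n])_n` with `0 < a n < b n ≤ a (n+1)` is
*substantial* if `Σ (b n / a n - 1)² = ∞`. -/
def IsSubstantial (a b : ℕ → ℝ) : Prop :=
  (∀ n, 0 < a n ∧ a n < b n ∧ b n ≤ a (n + 1)) ∧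
    ¬ Summable (fun n => (b n / a n - 1) ^ 2)

/-- `limsup_n b n / a n`, taken in the extended reals. -/
noncomputable def ratioLimsup (a b : ℕ → ℝ) : EReal :=
  Filter.limsup (fun n => ((b n / a n : ℝ) : EReal)) Filter.atTop

/-- `ℓ_I = liminf_n (F_Λ(b n) - F_Λ(a n)) / (b n - a n)`, in the extended reals. -/
noncomputable def ellOf (Λ : ℕ → ℝ) (a b : ℕ → ℝ) : EReal :=
  Filter.liminf
    (fun n => (((countFn Λ (b n) - countFn Λ (a n)) / (b n - a n) : ℝ) : EReal))
    Filter.atTop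

/-- The set `𝔯_A` of admissible rates `R ≥ 0`. -/
def RSet (Λ : ℕ → ℝ) (A : Set EReal) : Set ℝ :=
  {R | 0 ≤ R ∧ ∃ a b : ℕ → ℝ, IsSubstantial a b ∧ ratioLimsup a b ∈ A ∧
    ∀ᶠ n in Filter.atTop, R ≤ (countFn Λ (b n) - countFn Λ (a n)) / (b n - a n)}

/-- The (restricted) Beurling–Malliavin density `b_A(Λ) = sup 𝔯_A`. -/
noncomputable def bmDensity (Λ : ℕ → ℝ) (A : Set EReal) : EReal :=
  sSup ((fun r : ℝ => (r : EReal)) '' RSet Λ A)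

/-- The analogue of `polyaLimsup` where the inner `limsup` is taken along the
positive integers. -/
noncomputable def intPolyaLimsup (Λ : ℕ → ℝ) (η : ℝ) : EReal :=
  Filter.limsup
    (fun n : ℕ => (((countFn Λ (n : ℝ) - countFn Λ (η * (n : ℝ))) / ((1 - η) * (n : ℝ)) : ℝ) : EReal))
    Filter.atTop

lemma finite_le_set {Λ : ℕ → ℝ} (htend : Tendsto Λ atTop atTop) (t : ℝ) :
    {k : ℕ | Λ k ≤ t}.Finite := by
  obtain ⟨N, hN⟩ := eventually_atTop.1 (htend.eventually (eventually_gt_atTop t))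
  refine (Set.finite_Iio N).subset fun k hk => ?_
  by_contra h
  exact absurd (hN k (not_lt.1 h)) (not_lt.2 hk)

lemma countFn_nonneg (Λ : ℕ → ℝ) (t : ℝ) : 0 ≤ countFn Λ t := by
  unfold countFn; split <;> positivity

lemma countFn_mono {Λ : ℕ → ℝ} (htend : Tendsto Λ atTop atTop) :
    Monotone (countFn Λ) := by
  intro s t hst
  unfold countFn
  split
  · split
    · exact_mod_cast Nat.card_mono (finite_le_set htend t)
        (fun k hk => le_trans hk hst)
    · rename_i h1 h2; exact absurd (lt_of_lt_of_le h1 hst) h2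
  · split
    · positivity
    · exact le_refl _

noncomputable def chainSeq (η x : ℝ) : ℕ → ℕ
  | 0 => ⌈x⌉₊
  | (j+1) => ⌈η * chainSeq η x j⌉₊

lemma chainSeq_ge {η x : ℝ} (j : ℕ) : η * chainSeq η x j ≤ chainSeq η x (j+1) := by
  simpa [chainSeq] using Nat.le_ceil (η * chainSeq η x j)

lemma chainSeq_anti {η x : ℝ} (hη1 : η ≤ 1) :
    Antitone (chainSeq η x) := by
  refine antitone_nat_of_succ_le fun j => ?_
  show ⌈η * chainSeq η x j⌉₊ ≤ chainSeq η x j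
  rw [Nat.ceil_le]
  nlinarith [Nat.cast_nonneg (chainSeq η x j) (α := ℝ)]

lemma chainSeq_succ_le {η x : ℝ} (hη0 : 0 ≤ η) (j : ℕ) :
    (chainSeq η x (j+1) : ℝ) ≤ η * chainSeq η x j + 1 := by
  have h : (0:ℝ) ≤ η * chainSeq η x j := by positivity
  have := Nat.ceil_lt_add_one h
  exact le_of_lt (by simpa [chainSeq] using this)

set_option maxHeartbeats 1000000 in
lemma core_lemma {Λ : ℕ → ℝ} (htend : Tendsto Λ atTop atTop)
    {ξ η s δ : ℝ} (hξ0 : 0 < ξ) (hξη : ξ < η) (hη1 : η < 1) (hs : 0 ≤ s) (hδ : 0 < δ)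
    (hev : ∀ᶠ n : ℕ in atTop,
      (countFn Λ (n:ℝ) - countFn Λ (η * (n:ℝ))) / ((1 - η) * (n:ℝ)) ≤ s) :
    ∀ᶠ x : ℝ in atTop,
      (countFn Λ x - countFn Λ (ξ * x)) / ((1 - ξ) * x) ≤ s * (1 - η * ξ) / (1 - ξ) + δ := by
  classical
  obtain ⟨N, hN⟩ := eventually_atTop.1 hev
  set F := countFn Λ with hFdef
  have hF : Monotone F := countFn_mono htend
  clear_value F
  clear hFdef
  have hη0 : 0 < η := hξ0.trans hξη
  have hξ1 : ξ < 1 := hξη.trans hη1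
  have hη1' : (0:ℝ) < 1 - η := by linarith
  set K : ℝ := 4 / ((1 - η) * ξ) with hK
  have hKpos : 0 < K := by rw [hK]; positivity
  filter_upwards [eventually_ge_atTop (1:ℝ), eventually_ge_atTop ((N:ℝ)/ξ),
    eventually_ge_atTop (2/((1-η)*ξ)), eventually_ge_atTop (s*(1+K)/((1-ξ)*δ))]
    with x hx1 hxN hx2 hxδ
  set m := chainSeq η x with hm
  have hm0x : x ≤ (m 0 : ℝ) := Nat.le_ceil x
  have hm0x' : (m 0 : ℝ) ≤ x + 1 := le_of_lt (Nat.ceil_lt_add_one (by linarith))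
  have hanti : Antitone m := chainSeq_anti hη1.le
  have hge : ∀ j, η * m j ≤ m (j+1) := fun j => chainSeq_ge j
  have hsucc : ∀ j, (m (j+1) : ℝ) ≤ η * m j + 1 := fun j => chainSeq_succ_le hη0.le j
  clear_value m
  clear hm
  have hξx2 : 2 ≤ (1-η)*(ξ*x) := by
    rw [div_le_iff₀ (by positivity : (0:ℝ) < (1-η)*ξ)] at hx2
    nlinarith
  have hξx1 : 1 ≤ ξ * x := by nlinarith
  have hξxN : (N:ℝ) ≤ ξ * x := by
    rw [div_le_iff₀ hξ0] at hxN; nlinarith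
  -- existence of a stopping index
  have hex : ∃ j, η * (m j : ℝ) ≤ ξ * x := by
    by_contra h
    push_neg at h
    have hdec : ∀ j, m (j+1) < m j := by
      intro j
      have h1 : ξ * x < η * m j := h j
      have h2 : ξ * x ≤ (m j : ℝ) := by nlinarith
      have h3 := hsucc j
      have h4 : (m (j+1) : ℝ) < m j := by nlinarith
      exact_mod_cast h4
    have hkey : ∀ j, m j + j ≤ m 0 := by
      intro j; induction j with
      | zero => simp
      | succ n ih => have := hdec n; omega
    have := hkey (m 0 + 1); omega
  set k := Nat.find hex with hkdef
  have hk : η * (m k : ℝ) ≤ ξ * x := Nat.find_spec hex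
  have hmin : ∀ j, j < k → ξ * x < η * m j := fun j hj => not_le.1 (Nat.find_min hex hj)
  clear_value k
  clear hkdef
  have hmk : ξ * x ≤ (m k : ℝ) := by
    rcases Nat.eq_zero_or_pos k with h0 | hpos
    · rw [h0]; nlinarith
    · obtain ⟨j, hkj⟩ := Nat.exists_eq_succ_of_ne_zero hpos.ne'
      have h1 := hmin j (by omega)
      have h2 := hge j
      rw [hkj]
      linarith
  have hmj : ∀ j, j ≤ k → ξ * x ≤ (m j : ℝ) :=
    fun j hj => le_trans hmk (Nat.cast_le.2 (hanti hj))
  -- bound on k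
  have hkb : ∀ j, j ≤ k → (m j : ℝ) ≤ (m 0 : ℝ) - j * ((1-η)*(ξ*x) - 1) := by
    intro j hj; induction j with
    | zero => simp
    | succ n ih =>
      have hn : n ≤ k := le_of_lt (Nat.lt_of_succ_le hj)
      have h1 : ξ * x < η * m n := hmin n (Nat.lt_of_succ_le hj)
      have h2 : ξ * x ≤ (m n : ℝ) := by nlinarith
      have h3 := hsucc n
      have h4 := ih hn
      push_cast
      nlinarith
  have hkK : (k : ℝ) ≤ K := by
    have h1 := hkb k le_rfl
    have h2 : (0:ℝ) ≤ m k := Nat.cast_nonneg _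
    have hknn : (0:ℝ) ≤ (k:ℝ) := Nat.cast_nonneg k
    have e1 : (k:ℝ) * ((1-η)*(ξ*x) - 1) ≤ x + 1 := by linarith
    have e2 : (k:ℝ) * ((1-η)*(ξ*x)/2) ≤ (k:ℝ) * ((1-η)*(ξ*x) - 1) :=
      mul_le_mul_of_nonneg_left (by linarith) hknn
    have e4 : ((k:ℝ)*((1-η)*ξ))*x ≤ 4*x := by nlinarith
    have e5 : (k:ℝ)*((1-η)*ξ) ≤ 4 := le_of_mul_le_mul_right e4 (by linarith)
    rw [hK, le_div_iff₀ (by positivity : (0:ℝ) < (1-η)*ξ)]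
    exact e5
  -- per-term bound
  have hterm : ∀ j, j ≤ k → F (m j) - F (η * m j) ≤ s * ((1-η) * m j) := by
    intro j hj
    have hmj1 : 1 ≤ (m j : ℝ) := le_trans hξx1 (hmj j hj)
    have hNj : N ≤ m j := by
      have := le_trans hξxN (hmj j hj); exact_mod_cast this
    have hq := hN (m j) hNj
    have hpos : 0 < (1-η) * (m j : ℝ) := by nlinarith
    rw [div_le_iff₀ hpos] at hq
    linarith
  -- telescoping for counts
  have htel : ∀ j, F (m 0) - F (η * m j) ≤
      ∑ i ∈ Finset.range (j+1), (F (m i) - F (η * m i)) := by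
    intro j; induction j with
    | zero => simp
    | succ n ih =>
      rw [Finset.sum_range_succ]
      have h1 : F (η * m n) ≤ F (m (n+1)) := hF (hge n)
      linarith
  -- telescoping for lengths
  have hsum : ∀ j, ∑ i ∈ Finset.range (j+1), (1-η) * (m i : ℝ)
      ≤ (m 0 : ℝ) - η * m j + j := by
    intro j; induction j with
    | zero => simp; linarith
    | succ n ih =>
      rw [Finset.sum_range_succ]
      have h3 := hsucc n
      push_cast
      linarith
  -- main estimate
  have hmain : F x - F (ξ * x) ≤ s * ((1 - η*ξ) * x + 1 + K) := by
    have h1 : F x ≤ F (m 0) := hF hm0x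
    have h2 : F (η * m k) ≤ F (ξ * x) := hF hk
    have h3 := htel k
    have h4 : ∑ i ∈ Finset.range (k+1), (F (m i) - F (η * m i))
        ≤ ∑ i ∈ Finset.range (k+1), s * ((1-η) * (m i : ℝ)) :=
      Finset.sum_le_sum fun i hi => hterm i (Nat.lt_succ_iff.1 (Finset.mem_range.1 hi))
    have h5 : ∑ i ∈ Finset.range (k+1), s * ((1-η) * (m i:ℝ))
        = s * ∑ i ∈ Finset.range (k+1), ((1-η) * (m i:ℝ)) := by rw [Finset.mul_sum]
    have h6 := hsum k
    have h7 : (m 0:ℝ) - η * m k + k ≤ (1 - η*ξ) * x + 1 + K := by nlinarith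
    have h8 : s * ((m 0:ℝ) - η * m k + (k:ℝ)) ≤ s * ((1 - η*ξ) * x + 1 + K) :=
      mul_le_mul_of_nonneg_left h7 hs
    have h9 : s * (∑ i ∈ Finset.range (k+1), ((1-η) * (m i:ℝ)))
        ≤ s * ((m 0:ℝ) - η * m k + (k:ℝ)) := mul_le_mul_of_nonneg_left h6 hs
    linarith
  -- divide
  have hden : 0 < (1 - ξ) * x := by nlinarith
  rw [div_le_iff₀ hden]
  have hδx : s * (1 + K) ≤ δ * ((1-ξ)*x) := by
    rw [div_le_iff₀ (mul_pos (by linarith : (0:ℝ) < 1-ξ) hδ)] at hxδ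
    nlinarith
  have h1ξ : (1:ℝ) - ξ ≠ 0 := by linarith
  have hexp : (s*(1-η*ξ)/(1-ξ) + δ) * ((1-ξ)*x) = s*((1-η*ξ)*x) + δ*((1-ξ)*x) := by
    field_simp
  rw [hexp]
  nlinarith [hmain, hδx]

set_option maxHeartbeats 1000000 in
theorem stmt_18 (Λ : ℕ → ℝ) (hmono : StrictMono Λ) (h0 : 0 ≤ Λ 0)
    (htend : Filter.Tendsto Λ Filter.atTop Filter.atTop) :
    (⨆ ξ ∈ Set.Ioo (0 : ℝ) 1,
        Filter.limsup
          (fun x : ℝ => (((countFn Λ x - countFn Λ (ξ * x)) / ((1 - ξ) * x) : ℝ) : EReal))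
          Filter.atTop) ≤
      Filter.liminf (fun η : ℝ => intPolyaLimsup Λ η)
        (nhdsWithin (1 : ℝ) (Set.Ioo (0 : ℝ) 1)) := by
  have hF := countFn_mono htend
  refine iSup₂_le fun ξ hξ => ?_
  obtain ⟨hξ0, hξ1⟩ := hξ
  have hS0 : ∀ η : ℝ, η ∈ Set.Ioo (0:ℝ) 1 → (0:EReal) ≤ intPolyaLimsup Λ η := by
    intro η hη
    refine le_limsup_of_frequently_le (Filter.Eventually.frequently ?_)
    filter_upwards [eventually_ge_atTop 1] with n hn
    have hn1 : (1:ℝ) ≤ (n:ℝ) := by exact_mod_cast hn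
    have hq : (0:ℝ) ≤ (countFn Λ (n:ℝ) - countFn Λ (η * (n:ℝ))) / ((1-η)*(n:ℝ)) := by
      apply div_nonneg
      · have hle : η * (n:ℝ) ≤ (n:ℝ) := by nlinarith [hη.1, hη.2]
        have := hF hle
        linarith
      · nlinarith [hη.2]
    exact_mod_cast hq
  refine (Filter.le_liminf_iff (by isBoundedDefault) (by isBoundedDefault)).mpr fun b hb => ?_
  rcases lt_or_ge b 0 with hbneg | hbpos
  · filter_upwards [eventually_mem_nhdsWithin] with η hη
    exact lt_of_lt_of_le hbneg (hS0 η hη)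
  · have hbtop : b ≠ ⊤ := hb.ne_top
    have hbbot : b ≠ ⊥ := fun h => by rw [h] at hbpos; exact absurd hbpos (by simp)
    obtain ⟨c, hc1, hc2⟩ := exists_between hb
    have hctop : c ≠ ⊤ := hc2.ne_top
    have hcbot : c ≠ ⊥ := fun h => by rw [h] at hc1; exact absurd hc1 (by simp)
    set r := b.toReal with hrdef
    set r' := c.toReal with hrdef'
    have hbr : (r : EReal) = b := EReal.coe_toReal hbtop hbbot
    have hcr : (r' : EReal) = c := EReal.coe_toReal hctop hcbot
    have hr0 : 0 ≤ r := by rw [← hbr] at hbpos; exact_mod_cast hbpos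
    have hrr' : r < r' := by rw [← hbr, ← hcr] at hc1; exact_mod_cast hc1
    have hev1 : ∀ᶠ η : ℝ in 𝓝[Set.Ioo (0:ℝ) 1] 1, r * (1 - η*ξ) < r' * (1-ξ) := by
      apply eventually_nhdsWithin_of_eventually_nhds
      have hcont : ContinuousAt (fun η : ℝ => r * (1 - η*ξ)) 1 := by fun_prop
      have hlt : r * (1 - 1*ξ) < r' * (1-ξ) := by nlinarith
      exact hcont.eventually_lt continuousAt_const hlt
    have hev2 : ∀ᶠ η : ℝ in 𝓝[Set.Ioo (0:ℝ) 1] 1, ξ < η :=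
      eventually_nhdsWithin_of_eventually_nhds (lt_mem_nhds hξ1)
    filter_upwards [hev1, hev2, eventually_mem_nhdsWithin] with η h1 h2 hηI
    by_contra hcon
    push_neg at hcon
    rw [← hbr] at hcon
    have hη1 : η < 1 := hηI.2
    have h1mξ : (0:ℝ) < 1 - ξ := by linarith
    have h1mηξ : (0:ℝ) < 1 - η*ξ := by nlinarith [hηI.1]
    set g := r'*(1-ξ) - r*(1-η*ξ) with hg
    have hgpos : 0 < g := by rw [hg]; linarith
    set ε := g/(2*(1-η*ξ)) with hε
    set δ := g/(2*(1-ξ)) with hδ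
    have hεpos : 0 < ε := by rw [hε]; positivity
    have hδpos : 0 < δ := by rw [hδ]; positivity
    have e1 : ε*(1-η*ξ) = g/2 := by rw [hε]; field_simp
    have e2 : δ*(1-ξ) = g/2 := by rw [hδ]; field_simp
    have hfin : (r+ε) * (1 - η * ξ) / (1 - ξ) + δ ≤ r' := by
      have key : (r+ε)*(1-η*ξ) ≤ (r' - δ)*(1-ξ) := by nlinarith [e1, e2]
      have : (r+ε) * (1 - η * ξ) / (1 - ξ) ≤ r' - δ := by
        rw [div_le_iff₀ h1mξ]; linarith
      linarith
    have hevn : ∀ᶠ n : ℕ in atTop,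
        (countFn Λ (n:ℝ) - countFn Λ (η*(n:ℝ)))/((1-η)*(n:ℝ)) ≤ r + ε := by
      have hlt : intPolyaLimsup Λ η < ((r + ε : ℝ) : EReal) :=
        lt_of_le_of_lt hcon (by exact_mod_cast (lt_add_of_pos_right r hεpos))
      have hlt2 := eventually_lt_of_limsup_lt hlt
      filter_upwards [hlt2] with n hn
      exact le_of_lt (by exact_mod_cast hn)
    have hcore := core_lemma htend hξ0 h2 hη1 (by linarith : (0:ℝ) ≤ r + ε) hδpos hevn
    have hle : Filter.limsup
        (fun x : ℝ => (((countFn Λ x - countFn Λ (ξ * x)) / ((1 - ξ) * x) : ℝ) : EReal))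
        Filter.atTop ≤ ((r' : ℝ) : EReal) := by
      refine Filter.limsup_le_of_le (by isBoundedDefault) ?_
      filter_upwards [hcore] with x hx
      have : (countFn Λ x - countFn Λ (ξ*x))/((1-ξ)*x) ≤ r' := le_trans hx hfin
      exact_mod_cast this
    rw [hcr] at hle
    exact absurd hle (not_le.2 hc2)
end
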